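/- For all real numbers a, b, c with a > 0, c > 0 and ac − b² > 0, the integral over the upper half-plane ∫_{y>0} ∫_{x∈ℝ} exp(−(a(x²+y²)+2bx+c)/y) · y⁻² dx dy equals π·exp(−2√(ac−b²))/√(ac−b²). (Equivalently, the Poincaré density integrates to 1.) -/

import Mathlib

/-!
Completing the square in `x`, the inner Gaussian integral leaves
`√(π / a) ∫₀^∞ y^(-3/2) exp (-(a y + k² / (a y))) dy` with `k = √(ac - b²)`.
Substituting `a y = s²` with `s - k / s = t` turns the exponent into `t² + 2k` and the
Jacobian factor into `√a / k · (1 - t / √(t² + 4k))`; the odd part of this factor integrates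
to zero against `exp (-t²)`, leaving `√π`.
-/

open MeasureTheory Real Set

/-- The positive root `s` of `s ^ 2 = t * s + k`, i.e. the inverse of `s ↦ s - k / s` on `(0, ∞)`. -/
noncomputable def quadRoot (k t : ℝ) : ℝ := (t + √(t ^ 2 + 4 * k)) / 2

section QuadRoot

variable {k : ℝ}

lemma quadRoot_pos (hk : 0 < k) (t : ℝ) : 0 < quadRoot k t := by
  have : |t| < √(t ^ 2 + 4 * k) := (lt_sqrt (abs_nonneg t)).2 (by rw [sq_abs]; linarith)
  unfold quadRoot
  linarith [neg_abs_le t]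

lemma quadRoot_sq (hk : 0 ≤ k) (t : ℝ) : quadRoot k t ^ 2 = t * quadRoot k t + k := by
  have := sq_sqrt (by positivity : 0 ≤ t ^ 2 + 4 * k)
  unfold quadRoot
  linear_combination this / 4

lemma quadRoot_sub_div (hk : 0 < k) (t : ℝ) : quadRoot k t - k / quadRoot k t = t := by
  have := quadRoot_pos hk t
  field_simp
  linear_combination quadRoot_sq hk.le t

lemma quadRoot_injective (hk : 0 < k) : Function.Injective (quadRoot k) := fun t u h => by
  rw [← quadRoot_sub_div hk t, ← quadRoot_sub_div hk u, h]

lemma quadRoot_sub_div_self (hk : 0 ≤ k) {s : ℝ} (hs : 0 < s) : quadRoot k (s - k / s) = s := by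
  have hsq : (s - k / s) ^ 2 + 4 * k = (s + k / s) ^ 2 := by field_simp; ring
  unfold quadRoot
  rw [hsq, sqrt_sq (by positivity)]
  ring

lemma hasDerivAt_quadRoot (hk : 0 < k) (t : ℝ) :
    HasDerivAt (quadRoot k) (quadRoot k t / √(t ^ 2 + 4 * k)) t := by
  have := (hasDerivAt_id t).add (((hasDerivAt_pow 2 t).add_const (4 * k)).sqrt (by positivity))
  refine (this.div_const 2).congr_deriv ?_
  unfold quadRoot
  field_simp
  ring

end QuadRoot

section Substitution

variable {a k : ℝ}

lemma hasDerivAt_quadRoot_sq_div (hk : 0 < k) (t : ℝ) :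
    HasDerivAt (fun t => quadRoot k t ^ 2 / a)
      (2 * quadRoot k t ^ 2 / (a * √(t ^ 2 + 4 * k))) t := by
  refine (((hasDerivAt_quadRoot hk t).pow 2).div_const a).congr_deriv ?_
  ring

lemma injective_quadRoot_sq_div (ha : 0 < a) (hk : 0 < k) :
    Function.Injective (fun t => quadRoot k t ^ 2 / a) := fun t u h => by
  have hsq : quadRoot k t ^ 2 = quadRoot k u ^ 2 := by
    simpa only [div_left_inj' ha.ne'] using h
  exact quadRoot_injective hk
    ((pow_left_inj₀ (quadRoot_pos hk t).le (quadRoot_pos hk u).le two_ne_zero).1 hsq)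

lemma image_quadRoot_sq_div (ha : 0 < a) (hk : 0 < k) :
    (fun t => quadRoot k t ^ 2 / a) '' univ = Ioi 0 := by
  refine Subset.antisymm ?_ fun y (hy : 0 < y) => ?_
  · rintro _ ⟨t, -, rfl⟩
    exact div_pos (pow_pos (quadRoot_pos hk t) 2) ha
  · have hs : 0 < √(a * y) := sqrt_pos.2 (mul_pos ha hy)
    refine ⟨√(a * y) - k / √(a * y), mem_univ _, ?_⟩
    simp only [quadRoot_sub_div_self hk.le hs, sq_sqrt (mul_pos ha hy).le]
    field_simp

lemma abs_deriv_mul_quadRoot_sq_div (ha : 0 < a) (hk : 0 < k) (t : ℝ) :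
    |2 * quadRoot k t ^ 2 / (a * √(t ^ 2 + 4 * k))| *
        (exp (-(a * (quadRoot k t ^ 2 / a) + k ^ 2 / (a * (quadRoot k t ^ 2 / a)))) /
          (quadRoot k t ^ 2 / a * √(quadRoot k t ^ 2 / a))) =
      √a / k * exp (-2 * k) * ((1 - t / √(t ^ 2 + 4 * k)) * exp (-t ^ 2)) := by
  set s := quadRoot k t with hs_def
  set r := √(t ^ 2 + 4 * k)
  have hs : 0 < s := quadRoot_pos hk t
  have hr : 0 < r := sqrt_pos.2 (by positivity)
  have hr_eq : r = 2 * s - t := by rw [hs_def, quadRoot]; ring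
  have hsq : s ^ 2 = t * s + k := quadRoot_sq hk.le t
  have hexp : -(a * (s ^ 2 / a) + k ^ 2 / (a * (s ^ 2 / a))) = -2 * k + -t ^ 2 := by
    field_simp
    linear_combination (-(s ^ 2 + t * s - k)) * hsq
  have hsqrt : √(s ^ 2 / a) = s / √a := by rw [sqrt_div' _ ha.le, sqrt_sq hs.le]
  rw [abs_of_pos (by positivity), hexp, hsqrt, exp_add]
  field_simp
  linear_combination (-s) * hr_eq - 2 * hsq

end Substitution

section Gaussian

variable {c : ℝ}

lemma integrable_exp_neg_sq : Integrable (fun t : ℝ => exp (-t ^ 2)) := by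
  simpa using integrable_exp_neg_mul_sq one_pos

lemma integrable_div_sqrt_sq_add_mul_exp (hc : 0 ≤ c) :
    Integrable (fun t : ℝ => t / √(t ^ 2 + c) * exp (-t ^ 2)) := by
  refine integrable_exp_neg_sq.bdd_mul (c := 1) (f := fun t => t / √(t ^ 2 + c))
    (Measurable.aestronglyMeasurable (by fun_prop)) (ae_of_all _ fun t => ?_)
  rw [norm_div, norm_eq_abs, norm_of_nonneg (sqrt_nonneg _)]
  exact div_le_one_of_le₀ (abs_le_sqrt (by linarith)) (sqrt_nonneg _)

lemma integral_div_sqrt_sq_add_mul_exp (c : ℝ) :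
    ∫ t : ℝ, t / √(t ^ 2 + c) * exp (-t ^ 2) = 0 := by
  have h := integral_neg_eq_self (fun t : ℝ => t / √(t ^ 2 + c) * exp (-t ^ 2)) volume
  simp only [neg_sq, neg_div, neg_mul, integral_neg] at h
  linarith

lemma integrable_one_sub_div_sqrt_sq_add_mul_exp (hc : 0 ≤ c) :
    Integrable (fun t : ℝ => (1 - t / √(t ^ 2 + c)) * exp (-t ^ 2)) := by
  simp only [sub_mul, one_mul]
  exact integrable_exp_neg_sq.sub (integrable_div_sqrt_sq_add_mul_exp hc)

lemma integral_one_sub_div_sqrt_sq_add_mul_exp (hc : 0 ≤ c) :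
    ∫ t : ℝ, (1 - t / √(t ^ 2 + c)) * exp (-t ^ 2) = √π := by
  simp only [sub_mul, one_mul]
  rw [integral_sub integrable_exp_neg_sq (integrable_div_sqrt_sq_add_mul_exp hc),
    integral_div_sqrt_sq_add_mul_exp, sub_zero]
  simpa using integral_gaussian 1

end Gaussian

section HalfLine

variable {a k : ℝ}

lemma integrableOn_Ioi_exp_neg_add_div_mul_sqrt (ha : 0 < a) (hk : 0 < k) :
    IntegrableOn (fun y => exp (-(a * y + k ^ 2 / (a * y))) / (y * √y)) (Ioi 0) := by
  rw [← image_quadRoot_sq_div ha hk, integrableOn_image_iff_integrableOn_abs_deriv_smul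
    MeasurableSet.univ (fun t _ => (hasDerivAt_quadRoot_sq_div hk t).hasDerivWithinAt)
    (injective_quadRoot_sq_div ha hk).injOn]
  simp only [smul_eq_mul, abs_deriv_mul_quadRoot_sq_div ha hk, integrableOn_univ]
  exact (integrable_one_sub_div_sqrt_sq_add_mul_exp (by positivity)).const_mul _

lemma integral_Ioi_exp_neg_add_div_mul_sqrt (ha : 0 < a) (hk : 0 < k) :
    ∫ y in Ioi 0, exp (-(a * y + k ^ 2 / (a * y))) / (y * √y) =
      √a / k * exp (-2 * k) * √π := by
  rw [← image_quadRoot_sq_div ha hk, integral_image_eq_integral_abs_deriv_smul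
    MeasurableSet.univ (fun t _ => (hasDerivAt_quadRoot_sq_div hk t).hasDerivWithinAt)
    (injective_quadRoot_sq_div ha hk).injOn]
  simp only [smul_eq_mul, abs_deriv_mul_quadRoot_sq_div ha hk, Measure.restrict_univ,
    integral_const_mul, integral_one_sub_div_sqrt_sq_add_mul_exp (by positivity : 0 ≤ 4 * k)]

end HalfLine

section UpperHalfPlane

variable {a b c y : ℝ}

lemma exp_neg_quadratic_div_eq (ha : 0 < a) (hy : 0 < y) (x : ℝ) :
    exp (-(a * (x ^ 2 + y ^ 2) + 2 * b * x + c) / y) =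
      exp (-(a / y) * (x + b / a) ^ 2) * exp (-(a * y + (a * c - b ^ 2) / (a * y))) := by
  rw [← exp_add]
  congr 1
  field_simp
  ring

lemma integrable_exp_neg_quadratic_div (ha : 0 < a) (hy : 0 < y) :
    Integrable (fun x => exp (-(a * (x ^ 2 + y ^ 2) + 2 * b * x + c) / y)) := by
  simp only [exp_neg_quadratic_div_eq ha hy]
  exact ((integrable_exp_neg_mul_sq (div_pos ha hy)).comp_add_right (b / a)).mul_const _

lemma integral_exp_neg_quadratic_div_div_sq (ha : 0 < a) (hy : 0 < y) :
    ∫ x, exp (-(a * (x ^ 2 + y ^ 2) + 2 * b * x + c) / y) / y ^ 2 =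
      √(π / a) * (exp (-(a * y + (a * c - b ^ 2) / (a * y))) / (y * √y)) := by
  simp only [exp_neg_quadratic_div_eq ha hy]
  rw [integral_div, integral_mul_const,
    integral_add_right_eq_self (fun x => exp (-(a / y) * x ^ 2)) (b / a), integral_gaussian,
    div_div_eq_mul_div, mul_div_right_comm π, sqrt_mul' _ hy.le]
  have := sq_sqrt hy.le
  field_simp
  linear_combination this

lemma setIntegral_snd_pos_eq_integral_Ioi {f : ℝ × ℝ → ℝ} {g : ℝ → ℝ} (hf : Measurable f)
    (hf_nonneg : ∀ z, 0 ≤ f z) (hf_int : ∀ y > 0, Integrable fun x => f (x, y))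
    (hf_eq : ∀ y > 0, ∫ x, f (x, y) = g y) (hg : IntegrableOn g (Ioi 0)) :
    ∫ z in {w : ℝ × ℝ | 0 < w.2}, f z = ∫ y in Ioi 0, g y := by
  have hset : {w : ℝ × ℝ | 0 < w.2} = univ ×ˢ Ioi 0 := by ext; simp
  have hprod : Integrable f (volume.prod (volume.restrict (Ioi 0))) := by
    refine (integrable_prod_iff' hf.aestronglyMeasurable).2
      ⟨(ae_restrict_mem measurableSet_Ioi).mono hf_int, hg.congr ?_⟩
    filter_upwards [ae_restrict_mem measurableSet_Ioi] with y hy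
    simp only [norm_of_nonneg (hf_nonneg _), hf_eq y hy]
  rw [hset, Measure.volume_eq_prod, ← Measure.prod_restrict, Measure.restrict_univ,
    integral_prod_symm f hprod]
  exact setIntegral_congr_fun measurableSet_Ioi hf_eq

end UpperHalfPlane

theorem poincare_normalization (a b c : ℝ) (ha : 0 < a)
    (hdet : 0 < a * c - b ^ 2) :
    ∫ z in {w : ℝ × ℝ | 0 < w.2},
        Real.exp (-(a * (z.1 ^ 2 + z.2 ^ 2) + 2 * b * z.1 + c) / z.2) / z.2 ^ 2 =
      Real.pi * Real.exp (-2 * Real.sqrt (a * c - b ^ 2)) / Real.sqrt (a * c - b ^ 2) := by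
  set k := √(a * c - b ^ 2)
  have hk : 0 < k := sqrt_pos.2 hdet
  have hk_sq : a * c - b ^ 2 = k ^ 2 := (sq_sqrt hdet.le).symm
  rw [setIntegral_snd_pos_eq_integral_Ioi (by fun_prop) (fun z => by positivity)
    (fun y hy => (integrable_exp_neg_quadratic_div (b := b) (c := c) ha hy).div_const (y ^ 2))
    (fun y hy => integral_exp_neg_quadratic_div_div_sq ha hy)
    (hk_sq ▸ (integrableOn_Ioi_exp_neg_add_div_mul_sqrt ha hk).const_mul _),
    integral_const_mul]
  simp only [hk_sq, integral_Ioi_exp_neg_add_div_mul_sqrt ha hk, sqrt_div' _ ha.le]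
  have := mul_self_sqrt pi_pos.le
  field_simp
  linear_combination this
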